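/- arXiv:2511.19400 — 3 statements merged into one kernel-verified Lean document; each statement's English description precedes it below -/
import Mathlib

section
/- Let 0 < ν < ∞ and μ ≥ 1/2, and set ρ = min(1/ν, 1/μ). Then for every ε₁, ε₂ > 0 there exist C > 0 and ε₃ > 0 such that for all ξ, η ∈ ℝ^d: exp(−ε₁|ξ+η|^{1/ν}) · exp(−ε₂|ξ−η|^{1/μ}) ≤ C · exp(−ε₃ (|ξ|² + |η|²)^{ρ/2}). -/
open scoped Real

noncomputable section

lemma add_rpow_le_rpow_add' {x y p : ℝ} (hx : 0 ≤ x) (hy : 0 ≤ y) (hp : 0 ≤ p) (hp1 : p ≤ 1) :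
    (x + y) ^ p ≤ x ^ p + y ^ p := by
  have h := NNReal.rpow_add_le_add_rpow x.toNNReal y.toNNReal hp hp1
  have h2 := NNReal.coe_le_coe.mpr h
  rw [← Real.toNNReal_add hx hy] at h2
  simpa [NNReal.coe_rpow, Real.coe_toNNReal, hx, hy, add_nonneg hx hy] using h2

lemma rpow_le_rpow_add_one' {t : ℝ} (ht : 0 ≤ t) {p q : ℝ} (hp : 0 ≤ p) (hpq : p ≤ q) :
    t ^ p ≤ t ^ q + 1 := by
  rcases le_total t 1 with h | h
  · have h1 : t ^ p ≤ 1 := Real.rpow_le_one ht h hp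
    have h2 : 0 ≤ t ^ q := Real.rpow_nonneg ht q
    linarith
  · have := Real.rpow_le_rpow_of_exponent_le h hpq
    linarith

/-- For `0 < ν < ∞`, `μ ≥ 1/2` and `ρ = min(1/ν, 1/μ)`: for all `ε₁, ε₂ > 0` there are
`C > 0`, `ε₃ > 0` with
`exp(−ε₁|ξ+η|^{1/ν}) exp(−ε₂|ξ−η|^{1/μ}) ≤ C exp(−ε₃(|ξ|²+|η|²)^{ρ/2})` for all `ξ, η ∈ ℝ^d`. -/
theorem exp_decay_min_estimate
    (d : ℕ) (ν μ : ℝ) (hν : 0 < ν) (hμ : (1 : ℝ) / 2 ≤ μ)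
    (ε₁ ε₂ : ℝ) (hε₁ : 0 < ε₁) (hε₂ : 0 < ε₂) :
    ∃ C > (0 : ℝ), ∃ ε₃ > (0 : ℝ), ∀ ξ η : EuclideanSpace ℝ (Fin d),
      Real.exp (-ε₁ * ‖ξ + η‖ ^ ((1 : ℝ) / ν)) *
          Real.exp (-ε₂ * ‖ξ - η‖ ^ ((1 : ℝ) / μ)) ≤
        C * Real.exp (-ε₃ * (‖ξ‖ ^ 2 + ‖η‖ ^ 2) ^ (min ((1 : ℝ) / ν) ((1 : ℝ) / μ) / 2)) := by
  have hμ0 : 0 < μ := lt_of_lt_of_le (by norm_num) hμ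
  set ρ : ℝ := min ((1:ℝ)/ν) ((1:ℝ)/μ) with hρdef
  have hρ0 : 0 < ρ := lt_min (by positivity) (by positivity)
  have hρ2 : ρ ≤ 2 := le_trans (min_le_right _ _) (by rw [div_le_iff₀ hμ0]; linarith)
  set ε₃ : ℝ := min ε₁ ε₂ with hε₃def
  have hε₃ : 0 < ε₃ := lt_min hε₁ hε₂
  refine ⟨Real.exp (2 * ε₃), Real.exp_pos _, ε₃, hε₃, fun ξ η => ?_⟩
  rw [← Real.exp_add, ← Real.exp_add]
  apply Real.exp_le_exp.mpr
  set a := ‖ξ + η‖ with ha'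
  set b := ‖ξ - η‖ with hb'
  have ha : 0 ≤ a := norm_nonneg _
  have hb : 0 ≤ b := norm_nonneg _
  have key : (‖ξ‖^2 + ‖η‖^2 : ℝ) ≤ a^2 + b^2 := by
    have hp := parallelogram_law_with_norm ℝ ξ η
    nlinarith [sq_nonneg a, sq_nonneg b, norm_nonneg ξ, norm_nonneg η]
  have hS : (0:ℝ) ≤ ‖ξ‖^2 + ‖η‖^2 := by positivity
  have step1 : (‖ξ‖^2 + ‖η‖^2 : ℝ) ^ (ρ/2) ≤ (a^2 + b^2) ^ (ρ/2) :=
    Real.rpow_le_rpow hS key (by linarith)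
  have step2 : ((a:ℝ)^2 + b^2) ^ (ρ/2) ≤ (a^2) ^ (ρ/2) + (b^2) ^ (ρ/2) :=
    add_rpow_le_rpow_add' (by positivity) (by positivity) (by linarith) (by linarith)
  have ha2 : ((a:ℝ)^2) ^ (ρ/2) = a ^ ρ := by
    rw [← Real.rpow_natCast a 2, ← Real.rpow_mul ha]
    congr 1; ring
  have hb2 : ((b:ℝ)^2) ^ (ρ/2) = b ^ ρ := by
    rw [← Real.rpow_natCast b 2, ← Real.rpow_mul hb]
    congr 1; ring
  have haρ : a ^ ρ ≤ a ^ ((1:ℝ)/ν) + 1 :=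
    rpow_le_rpow_add_one' ha hρ0.le (min_le_left _ _)
  have hbρ : b ^ ρ ≤ b ^ ((1:ℝ)/μ) + 1 :=
    rpow_le_rpow_add_one' hb hρ0.le (min_le_right _ _)
  have h31 : ε₃ ≤ ε₁ := min_le_left _ _
  have h32 : ε₃ ≤ ε₂ := min_le_right _ _
  have hav : 0 ≤ a ^ ((1:ℝ)/ν) := Real.rpow_nonneg ha _
  have hbv : 0 ≤ b ^ ((1:ℝ)/μ) := Real.rpow_nonneg hb _
  nlinarith [step1, step2, ha2, hb2, haρ, hbρ, Real.rpow_nonneg hS (ρ/2)]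
end
end

section
/- Let d ≥ 1, α ≥ 0, β ∈ ℝ, γ = α + iβ, t ≥ 0, and set ρ_t = 1 + 2πγt (so Re ρ_t > 0). Let g(t) = e^{−π|t|²} and let T be the heat propagator T f = 𝓕^{−1}(e^{−4π²γt|·|²} 𝓕f). Then for all z = (z₁, z₂) and w = (w₁, w₂) in ℝ^d × ℝ^d, the Gabor matrix satisfies ⟨T π(z)g, π(w)g⟩_{L²(ℝ^d)} = (2ρ_t)^{−d/2} exp(−π(|z₂|² + |w₂|²)) exp(2πi(z₂·z₁ − w₂·w₁)) exp((π/(2ρ_t)) c·c), where c = (z₂ + w₂) + i(w₁ − z₁) ∈ ℂ^d, c·c = Σ_k c_k², and (2ρ_t)^{−d/2} is the principal branch. -/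
open MeasureTheory Complex
open scoped Real

noncomputable section

variable {d : ℕ}

/-- Fourier transform `𝓕f(ξ) = ∫ f(x) e^{−2πi x·ξ} dx`. -/
def fourierTf (f : EuclideanSpace ℝ (Fin d) → ℂ) (ξ : EuclideanSpace ℝ (Fin d)) : ℂ :=
  ∫ x, f x * Complex.exp (-(2 * π * (inner ℝ x ξ : ℝ)) * Complex.I)

/-- Heat propagator `Tf = 𝓕^{−1}(e^{−4π²γt|·|²} 𝓕f)`, written as a pointwise integral. -/
def heatProp (γ : ℂ) (t : ℝ) (f : EuclideanSpace ℝ (Fin d) → ℂ)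
    (x : EuclideanSpace ℝ (Fin d)) : ℂ :=
  ∫ ξ, Complex.exp (-4 * π ^ 2 * γ * t * ‖ξ‖ ^ 2) * fourierTf f ξ *
    Complex.exp ((2 * π * (inner ℝ x ξ : ℝ)) * Complex.I)

/-- Time–frequency shift `π(z)f(t) = e^{2πi z₂·t} f(t − z₁)`. -/
def tfShift (z : EuclideanSpace ℝ (Fin d) × EuclideanSpace ℝ (Fin d))
    (f : EuclideanSpace ℝ (Fin d) → ℂ) (t : EuclideanSpace ℝ (Fin d)) : ℂ :=
  Complex.exp ((2 * π * (inner ℝ z.2 t : ℝ)) * Complex.I) * f (t - z.1)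

/-- Gaussian window `g(t) = e^{−π|t|²}`. -/
def gaussWin (t : EuclideanSpace ℝ (Fin d)) : ℂ :=
  (Real.exp (-π * ‖t‖ ^ 2) : ℝ)

/-!
Everything in sight is a Gaussian. In each coordinate, `π(z)g` is the exponential of a quadratic
polynomial, and the Fourier transform, the heat multiplier followed by the inverse Fourier
transform, and the final pairing with `π(w)g` each integrate such an exponential against
`e^{-b x²}` with `Re b > 0`, which is done by completing the square. The only delicate point is
the branch of the power: with `σ = 1 + 4πγt` the two prefactors `σ^{-d/2}` and
`(σ/(1+σ))^{d/2}` combine to `(1+σ)^{-d/2} = (2ρ_t)^{-d/2}` because both bases have positive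
real part, so their arguments add without leaving `(-π, π)`.
-/

open Finset

namespace Complex

lemma mul_cpow_of_re_pos {x y : ℂ} (hx : 0 < x.re) (hy : 0 < y.re) (a : ℂ) :
    (x * y) ^ a = x ^ a * y ^ a := by
  have hx0 : x ≠ 0 := fun h ↦ by simp [h] at hx
  have hy0 : y ≠ 0 := fun h ↦ by simp [h] at hy
  have hax := abs_lt.mp (abs_arg_lt_pi_div_two_iff.mpr (Or.inl hx))
  have hay := abs_lt.mp (abs_arg_lt_pi_div_two_iff.mpr (Or.inl hy))
  rw [cpow_def_of_ne_zero hx0, cpow_def_of_ne_zero hy0, cpow_def_of_ne_zero (mul_ne_zero hx0 hy0),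
    ← Complex.exp_add, ← add_mul, log_mul hx0 hy0 ⟨by linarith, by linarith [Real.pi_pos]⟩]

lemma inv_re_pos {x : ℂ} (hx : 0 < x.re) : 0 < x⁻¹.re := by
  rw [inv_re]
  exact div_pos hx (normSq_pos.mpr fun h ↦ by simp [h] at hx)

end Complex

namespace EuclideanSpace

variable {ι : Type*} [Fintype ι]

lemma ofReal_norm_sq (x : EuclideanSpace ℝ ι) : (‖x‖ : ℂ) ^ 2 = ∑ i, (x i : ℂ) ^ 2 := by
  rw [← ofReal_pow, EuclideanSpace.norm_sq_eq]
  push_cast [Real.norm_eq_abs, sq_abs]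
  rfl

lemma ofReal_inner (x y : EuclideanSpace ℝ ι) :
    ((inner ℝ x y : ℝ) : ℂ) = ∑ i, (x i : ℂ) * y i := by
  simp [PiLp.inner_apply, mul_comm]

theorem integral_cexp_sum_quadratic {b : ℂ} (hb : 0 < b.re) (c e : ι → ℂ) :
    ∫ x : EuclideanSpace ℝ ι, cexp (∑ i, (-b * (x i : ℂ) ^ 2 + c i * x i + e i))
      = (π / b) ^ (Fintype.card ι / 2 : ℂ) * cexp (∑ i, (e i + c i ^ 2 / (4 * b))) := by
  have hsplit : ∀ y : ι → ℝ, cexp (∑ i, (-b * (y i : ℂ) ^ 2 + c i * y i + e i))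
      = cexp (∑ i, e i) * cexp (-b * ∑ i, (y i : ℂ) ^ 2 + ∑ i, c i * y i) := fun y ↦ by
    rw [← Complex.exp_add, mul_sum, ← sum_add_distrib, ← sum_add_distrib]
    exact congrArg cexp (sum_congr rfl fun i _ ↦ by ring)
  rw [← (PiLp.volume_preserving_toLp ι).integral_comp
    (MeasurableEquiv.toLp 2 (ι → ℝ)).measurableEmbedding]
  simp only [hsplit]
  rw [integral_const_mul, GaussianFourier.integral_cexp_neg_mul_sum_add hb, mul_left_comm,
    ← Complex.exp_add, sum_div, ← sum_add_distrib]

end EuclideanSpace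

open EuclideanSpace

lemma tfShift_gaussWin_apply (z : EuclideanSpace ℝ (Fin d) × EuclideanSpace ℝ (Fin d))
    (x : EuclideanSpace ℝ (Fin d)) :
    tfShift z gaussWin x = cexp (∑ i, (2 * π * z.2 i * x i * I - π * (x i - z.1 i) ^ 2)) := by
  rw [tfShift, gaussWin, ofReal_exp, ← Complex.exp_add]
  push_cast
  rw [ofReal_inner, ofReal_norm_sq, mul_sum, sum_mul, mul_sum, ← sum_add_distrib]
  exact congrArg cexp (sum_congr rfl fun i _ ↦ by simp; ring)

lemma conj_tfShift_gaussWin (w : EuclideanSpace ℝ (Fin d) × EuclideanSpace ℝ (Fin d))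
    (x : EuclideanSpace ℝ (Fin d)) :
    starRingEnd ℂ (tfShift w gaussWin x)
      = cexp (∑ i, (-2 * π * w.2 i * x i * I - π * (x i - w.1 i) ^ 2)) := by
  rw [tfShift_gaussWin_apply, ← Complex.exp_conj, map_sum]
  exact congrArg cexp (sum_congr rfl fun i _ ↦ by simp [map_ofNat])

lemma fourierTf_tfShift_gaussWin (z : EuclideanSpace ℝ (Fin d) × EuclideanSpace ℝ (Fin d))
    (ξ : EuclideanSpace ℝ (Fin d)) :
    fourierTf (tfShift z gaussWin) ξ
      = cexp (∑ i, (2 * π * z.1 i * (z.2 i - ξ i) * I - π * (ξ i - z.2 i) ^ 2)) := by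
  have hπ : (π : ℂ) ≠ 0 := ofReal_ne_zero.mpr Real.pi_ne_zero
  have hintegrand : ∀ x : EuclideanSpace ℝ (Fin d),
      tfShift z gaussWin x * cexp (-(2 * π * (inner ℝ x ξ : ℝ)) * I)
        = cexp (∑ i, (-π * (x i : ℂ) ^ 2 + (2 * π * z.1 i + 2 * π * (z.2 i - ξ i) * I) * x i
            + -π * z.1 i ^ 2)) := fun x ↦ by
    rw [tfShift_gaussWin_apply, ofReal_inner, ← Complex.exp_add, mul_sum, neg_mul, sum_mul,
      ← sum_neg_distrib, ← sum_add_distrib]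
    exact congrArg cexp (sum_congr rfl fun i _ ↦ by ring)
  simp only [fourierTf, hintegrand]
  rw [integral_cexp_sum_quadratic (by simpa using Real.pi_pos), div_self hπ, one_cpow, one_mul]
  refine congrArg cexp (sum_congr rfl fun i _ ↦ ?_)
  field_simp
  ring_nf
  simp only [I_sq]
  ring

lemma heatProp_tfShift_gaussWin {γ : ℂ} {t : ℝ} (hσ : 0 < (1 + 4 * π * γ * t).re)
    (z : EuclideanSpace ℝ (Fin d) × EuclideanSpace ℝ (Fin d)) (s : EuclideanSpace ℝ (Fin d)) :
    heatProp γ t (tfShift z gaussWin) s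
      = (1 / (1 + 4 * π * γ * t)) ^ (d / 2 : ℂ) * cexp (∑ i, (-π * z.2 i ^ 2
          + 2 * π * z.1 i * z.2 i * I
          + π / (1 + 4 * π * γ * t) * (z.2 i + (s i - z.1 i) * I) ^ 2)) := by
  set σ : ℂ := 1 + 4 * π * γ * t with hσ_def
  have hπ : (π : ℂ) ≠ 0 := ofReal_ne_zero.mpr Real.pi_ne_zero
  have hσ0 : σ ≠ 0 := fun h ↦ by simp [h] at hσ
  have hintegrand : ∀ ξ : EuclideanSpace ℝ (Fin d),
      cexp (-4 * π ^ 2 * γ * t * ‖ξ‖ ^ 2) * fourierTf (tfShift z gaussWin) ξ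
          * cexp (2 * π * (inner ℝ s ξ : ℝ) * I)
        = cexp (∑ i, (-(π * σ) * (ξ i : ℂ) ^ 2 + 2 * π * (z.2 i + (s i - z.1 i) * I) * ξ i
            + (-π * z.2 i ^ 2 + 2 * π * z.1 i * z.2 i * I))) := fun ξ ↦ by
    rw [fourierTf_tfShift_gaussWin, ofReal_inner, ← Complex.exp_add, ← Complex.exp_add,
      ofReal_norm_sq, mul_sum, mul_sum, sum_mul, ← sum_add_distrib, ← sum_add_distrib]
    exact congrArg cexp (sum_congr rfl fun i _ ↦ by rw [hσ_def]; ring)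
  have hπσ : 0 < (π * σ).re := by simpa using mul_pos Real.pi_pos hσ
  simp only [heatProp, hintegrand]
  rw [integral_cexp_sum_quadratic hπσ, Fintype.card_fin, div_mul_cancel_left₀ hπ, one_div]
  refine congrArg _ (congrArg cexp (sum_congr rfl fun i _ ↦ ?_))
  field_simp
  ring

lemma inv_cpow_mul_inv_one_add_inv_cpow {σ : ℂ} (hσ : 0 < σ.re) (a : ℂ) :
    σ⁻¹ ^ a * (1 + σ⁻¹)⁻¹ ^ a = (1 + σ) ^ (-a) := by
  have hσ0 : σ ≠ 0 := fun h ↦ by simp [h] at hσ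
  have hσinv : 0 < σ⁻¹.re := inv_re_pos hσ
  have hone_add : 0 < (1 + σ).re := by simp only [add_re, one_re]; linarith
  have hone_add_inv : 0 < (1 + σ⁻¹).re := by simp only [add_re, one_re]; linarith
  rw [← mul_cpow_of_re_pos hσinv (inv_re_pos hone_add_inv),
    show σ⁻¹ * (1 + σ⁻¹)⁻¹ = (1 + σ)⁻¹ by field_simp; ring,
    inv_cpow _ _ fun h ↦ by linarith [(arg_eq_pi_iff.mp h).1], cpow_neg]

theorem gabor_matrix_heatProp_gaussWin {γ : ℂ} {t : ℝ} (hσ : 0 < (1 + 4 * π * γ * t).re)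
    (z w : EuclideanSpace ℝ (Fin d) × EuclideanSpace ℝ (Fin d)) :
    (∫ s, heatProp γ t (tfShift z gaussWin) s * (starRingEnd ℂ) (tfShift w gaussWin s))
      = (2 * (1 + 2 * π * γ * t)) ^ (-(d : ℂ) / 2) *
          Complex.exp (-(π : ℂ) * (‖z.2‖ ^ 2 + ‖w.2‖ ^ 2)) *
          Complex.exp (2 * π * Complex.I *
            (((inner ℝ z.2 z.1 : ℝ) : ℂ) - ((inner ℝ w.2 w.1 : ℝ) : ℂ))) *
          Complex.exp ((π : ℂ) / (2 * (1 + 2 * π * γ * t)) *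
            ∑ k, (((z.2 k + w.2 k : ℝ) : ℂ) + ((w.1 k - z.1 k : ℝ) : ℂ) * Complex.I) ^ 2) := by
  have h2ρ : 2 * (1 + 2 * π * γ * t) = 1 + (1 + 4 * π * γ * t) := by ring
  simp only [heatProp_tfShift_gaussWin hσ, conj_tfShift_gaussWin, h2ρ]
  set σ : ℂ := 1 + 4 * π * γ * t
  have hσ0 : σ ≠ 0 := fun h ↦ by simp [h] at hσ
  have hσ1 : 1 + σ ≠ 0 := fun h ↦ by
    have := congrArg re h; simp only [add_re, one_re, zero_re] at this; linarith
  have hσ1' : σ + 1 ≠ 0 := by rwa [add_comm]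
  set b : ℂ := π * (1 + σ⁻¹)
  have hb : 0 < b.re := by
    have := inv_re_pos hσ
    simp only [b, re_ofReal_mul, add_re, one_re]
    positivity
  have hintegrand : ∀ s : EuclideanSpace ℝ (Fin d),
      (1 / σ) ^ (d / 2 : ℂ) * cexp (∑ i, (-π * z.2 i ^ 2 + 2 * π * z.1 i * z.2 i * I
          + π / σ * (z.2 i + (s i - z.1 i) * I) ^ 2))
        * cexp (∑ i, (-2 * π * w.2 i * s i * I - π * (s i - w.1 i) ^ 2))
      = (1 / σ) ^ (d / 2 : ℂ) * cexp (∑ i, (-b * (s i : ℂ) ^ 2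
          + 2 * π * (σ⁻¹ * (z.1 i + z.2 i * I) - w.2 i * I + w.1 i) * s i
          + (-π * z.2 i ^ 2 + 2 * π * z.1 i * z.2 i * I + π / σ * (z.2 i - z.1 i * I) ^ 2
            - π * w.1 i ^ 2))) := fun s ↦ by
    rw [mul_assoc, ← Complex.exp_add, ← sum_add_distrib]
    refine congrArg _ (congrArg cexp (sum_congr rfl fun i _ ↦ ?_))
    simp only [b]
    field_simp
    ring_nf
    simp only [I_sq]
    ring
  simp only [hintegrand]
  rw [integral_const_mul, integral_cexp_sum_quadratic hb, Fintype.card_fin,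
    show π / b = (1 + σ⁻¹)⁻¹ by simp only [b]; field_simp, ← mul_assoc, one_div,
    inv_cpow_mul_inv_one_add_inv_cpow hσ, ← neg_div, mul_assoc, mul_assoc, ← Complex.exp_add,
    ← Complex.exp_add, ofReal_norm_sq, ofReal_norm_sq, ofReal_inner, ofReal_inner,
    ← sum_add_distrib, ← sum_sub_distrib, mul_sum, mul_sum, mul_sum, ← sum_add_distrib, ← sum_add_distrib]
  refine congrArg _ (congrArg cexp (sum_congr rfl fun i _ ↦ ?_))
  simp only [b]
  push_cast
  field_simp
  ring_nf
  simp only [I_sq]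
  ring

theorem gabor_matrix_complex_heat_general
    (α β t : ℝ) (hα : 0 ≤ α) (ht : 0 ≤ t)
    (z w : EuclideanSpace ℝ (Fin d) × EuclideanSpace ℝ (Fin d)) :
    (∫ s, heatProp ((α : ℂ) + β * Complex.I) t (tfShift z gaussWin) s *
        (starRingEnd ℂ) (tfShift w gaussWin s))
      = (2 * (1 + 2 * π * ((α : ℂ) + β * Complex.I) * t)) ^ (-(d : ℂ) / 2) *
          Complex.exp (-(π : ℂ) * (‖z.2‖ ^ 2 + ‖w.2‖ ^ 2)) *
          Complex.exp (2 * π * Complex.I *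
            (((inner ℝ z.2 z.1 : ℝ) : ℂ) - ((inner ℝ w.2 w.1 : ℝ) : ℂ))) *
          Complex.exp ((π : ℂ) / (2 * (1 + 2 * π * ((α : ℂ) + β * Complex.I) * t)) *
            ∑ k, (((z.2 k + w.2 k : ℝ) : ℂ) + ((w.1 k - z.1 k : ℝ) : ℂ) * Complex.I) ^ 2) :=
  gabor_matrix_heatProp_gaussWin (by simp; positivity) z w

/-- **Exact Gabor matrix of the complex heat propagator.** With `γ = α + iβ`
(`α ≥ 0`, `t ≥ 0`) and `ρ_t = 1 + 2πγt`,
`⟨Tπ(z)g, π(w)g⟩ = (2ρ_t)^{−d/2} e^{−π(|z₂|²+|w₂|²)} e^{2πi(z₂·z₁ − w₂·w₁)}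
  e^{(π/(2ρ_t)) c·c}`, where `c = (z₂+w₂) + i(w₁−z₁)` and the power is principal. -/
theorem gabor_matrix_complex_heat
    (hd : 1 ≤ d) (α β t : ℝ) (hα : 0 ≤ α) (ht : 0 ≤ t)
    (z w : EuclideanSpace ℝ (Fin d) × EuclideanSpace ℝ (Fin d)) :
    (∫ s, heatProp ((α : ℂ) + β * Complex.I) t (tfShift z gaussWin) s *
        (starRingEnd ℂ) (tfShift w gaussWin s))
      = (2 * (1 + 2 * π * ((α : ℂ) + β * Complex.I) * t)) ^ (-(d : ℂ) / 2) *
          Complex.exp (-(π : ℂ) * (‖z.2‖ ^ 2 + ‖w.2‖ ^ 2)) *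
          Complex.exp (2 * π * Complex.I *
            (((inner ℝ z.2 z.1 : ℝ) : ℂ) - ((inner ℝ w.2 w.1 : ℝ) : ℂ))) *
          Complex.exp ((π : ℂ) / (2 * (1 + 2 * π * ((α : ℂ) + β * Complex.I) * t)) *
            ∑ k, (((z.2 k + w.2 k : ℝ) : ℂ) + ((w.1 k - z.1 k : ℝ) : ℂ) * Complex.I) ^ 2) :=
  gabor_matrix_complex_heat_general α β t hα ht z w
end
end

section
/- Let t > 0. Then for every s ∈ ℝ and every ξ ∈ ℝ with ξ ≠ 0: (1/4) ∫_{ℝ} e^{−2πi r ξ} · 1_{[−t,t]}(s + r/2) · 1_{[−t,t]}(s − r/2) dr = 1_{\{|s| ≤ t\}} · sin(4π(t − |s|)ξ)/(4πξ). (This is the Wigner-kernel density κ_t^{(1)}(s, ξ) of the one-dimensional wave propagator with multiplier sin(2π|ξ|t)/(2π|ξ|), whose Wigner kernel is δ(ξ−η) κ_t^{(1)}(x−y, ξ).) -/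
open MeasureTheory Complex
open scoped Real

/-!
The two indicators are simultaneously nonzero exactly when `|r| ≤ 2 (t - |s|)`, an interval that
is empty unless `|s| ≤ t`. The integral is therefore the Fourier transform of the indicator of
`[-a, a]` with `a = 2 (t - |s|)`, namely `2 sin (2π a ξ) / (2π ξ)`.
-/

theorem add_half_mem_Icc_and_sub_half_mem_Icc_iff {t s r : ℝ} :
    (s + r / 2 ∈ Set.Icc (-t) t ∧ s - r / 2 ∈ Set.Icc (-t) t) ↔
      r ∈ Set.Icc (-(2 * (t - |s|))) (2 * (t - |s|)) := by
  simp only [Set.mem_Icc]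
  rcases abs_cases s with ⟨hs, _⟩ | ⟨hs, _⟩ <;> rw [hs] <;> constructor <;> intros <;>
    refine ⟨?_, ?_⟩ <;> (try refine ⟨?_, ?_⟩) <;> linarith

theorem mul_indicator_add_half_mul_indicator_sub_half {M : Type*} [MulZeroOneClass M]
    (f : ℝ → M) (t s r : ℝ) :
    f r * (Set.Icc (-t) t).indicator (fun _ => (1 : M)) (s + r / 2) *
        (Set.Icc (-t) t).indicator (fun _ => (1 : M)) (s - r / 2) =
      (Set.Icc (-(2 * (t - |s|))) (2 * (t - |s|))).indicator f r := by
  simp only [Set.indicator_apply, ← add_half_mem_Icc_and_sub_half_mem_Icc_iff]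
  split_ifs <;> simp_all

theorem integral_exp_neg_mul_I (a : ℝ) {b : ℝ} (hb : b ≠ 0) :
    ∫ r in (-a)..a, cexp (-(b * r) * I) = 2 * Real.sin (b * a) / b := by
  have := intervalIntegral.integral_comp_mul_left (a := -a) (b := a)
    (fun x : ℝ => cexp (x * I)) (neg_ne_zero.mpr hb)
  simp only [ofReal_mul, ofReal_neg, neg_mul] at this ⊢
  rw [this, intervalIntegral.integral_symm, mul_neg, neg_neg, integral_exp_mul_I_eq_sin]
  simp only [real_smul]
  push_cast
  field_simp

theorem wigner_kernel_wave_1d_general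
    (t : ℝ) (s ξ : ℝ) (hξ : ξ ≠ 0) :
    (1 / 4 : ℂ) * ∫ r : ℝ, Complex.exp (-(2 * π * r * ξ) * Complex.I) *
        (Set.Icc (-t) t).indicator (fun _ => (1 : ℂ)) (s + r / 2) *
        (Set.Icc (-t) t).indicator (fun _ => (1 : ℂ)) (s - r / 2)
      = if |s| ≤ t then ((Real.sin (4 * π * (t - |s|) * ξ) / (4 * π * ξ) : ℝ) : ℂ)
        else 0 := by
  simp_rw [mul_indicator_add_half_mul_indicator_sub_half
    (fun r : ℝ => cexp (-(2 * π * r * ξ) * I))]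
  rw [integral_indicator measurableSet_Icc]
  split_ifs with hst
  · have hπξ : 2 * π * ξ ≠ 0 := by positivity
    have hb : ∀ r : ℝ, -(2 * π * r * ξ : ℂ) * I = -(((2 * π * ξ : ℝ) : ℂ) * r) * I := by
      intro r
      push_cast
      ring
    rw [integral_Icc_eq_integral_Ioc, ← intervalIntegral.integral_of_le (by linarith)]
    simp_rw [hb]
    rw [integral_exp_neg_mul_I _ hπξ]
    push_cast
    field_simp
    ring_nf
  · rw [Set.Icc_eq_empty (by linarith), Measure.restrict_empty, integral_zero_measure,
      mul_zero]

/-- **Wigner-kernel density of the one-dimensional wave propagator.** For `t > 0`,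
`s ∈ ℝ`, `ξ ≠ 0`:
`(1/4)∫ e^{−2πi rξ} 1_{[−t,t]}(s+r/2) 1_{[−t,t]}(s−r/2) dr
  = 1_{|s|≤t} sin(4π(t−|s|)ξ)/(4πξ)`. -/
theorem wigner_kernel_wave_1d
    (t : ℝ) (ht : 0 < t) (s ξ : ℝ) (hξ : ξ ≠ 0) :
    (1 / 4 : ℂ) * ∫ r : ℝ, Complex.exp (-(2 * π * r * ξ) * Complex.I) *
        (Set.Icc (-t) t).indicator (fun _ => (1 : ℂ)) (s + r / 2) *
        (Set.Icc (-t) t).indicator (fun _ => (1 : ℂ)) (s - r / 2)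
      = if |s| ≤ t then ((Real.sin (4 * π * (t - |s|) * ξ) / (4 * π * ξ) : ℝ) : ℂ)
        else 0 :=
  wigner_kernel_wave_1d_general t s ξ hξ
end
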